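/- Let q be an odd prime power and k ≥ 3 an integer. Then every arc of F_q^k has size at most q+k−2; equivalently, there is no arc of F_q^k of size q+k−1. -/
import Mathlib


open Finset

variable {F : Type*} [Field F]

/-- An *arc*: every `k`-subset is a set of linearly independent vectors
(hence a basis of `F^k`). -/
def IsArc {k : ℕ} (S : Set (Fin k → F)) : Prop :=
  ∀ T : Finset (Fin k → F), ↑T ⊆ S → T.card = k →
    LinearIndependent F (Subtype.val : {x // x ∈ T} → (Fin k → F))

/-- The *weight* of a vector: its number of nonzero coordinates. -/
noncomputable def weight {ι : Type*} (w : ι → F) : ℕ := Nat.card {i // w i ≠ 0}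

/-- `det(u, C)`: the determinant of the `k × k` matrix whose first row is `u` and whose
remaining rows are the vectors `g i`, `i ∈ C`, listed in increasing order of the index set. -/
noncomputable def detWith {k m : ℕ} (g : Fin m → Fin k → F)
    (u : Fin k → F) (C : Finset (Fin m)) : F :=
  if h : C.card + 1 = k then
    Matrix.det (Matrix.of ((Fin.cons u fun j => g (C.orderEmbOfFin rfl j)) ∘ Fin.cast h.symm))
  else 0

/-- The matrix `M_n` associated to an ordered arc `g : Fin m → (Fin k → F)`. -/
noncomputable def arcMatrix {k m : ℕ} (g : Fin m → Fin k → F) (n : ℕ) :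
    Matrix {C : Finset (Fin m) // C.card = k - 1}
      {AE : Finset (Fin m) × Finset (Fin m) //
        AE.2.card = m - n ∧ AE.1 ⊆ AE.2 ∧ AE.1.card = k - 2} F :=
  fun C AE =>
    if AE.1.1 ⊆ C.1 then ∏ u ∈ Finset.univ \ AE.1.2, detWith g (g u) C.1 else 0

/-- `det(z, Y₁, …, Y_{k-1})`. -/
noncomputable def detRows {k : ℕ} (z : Fin k → F) (Y : Fin (k - 1) → Fin k → F) : F :=
  if h : k - 1 + 1 = k then Matrix.det (Matrix.of ((Fin.cons z Y) ∘ Fin.cast h.symm)) else 0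

/-- `d_A(u,v) = det(u, v, p₁, …, p_{k-2})` for an ordered tuple `A = (p₁, …, p_{k-2})`. -/
noncomputable def dA {k : ℕ} (p : Fin (k - 2) → Fin k → F) (u v : Fin k → F) : F :=
  if h : k - 2 + 1 + 1 = k then
    Matrix.det (Matrix.of ((Fin.cons u (Fin.cons v p)) ∘ Fin.cast h.symm))
  else 0

/-- `f` is a tangent polynomial for the `(k-2)`-subset `A` of the arc `S`:
a product of `t` pairwise linearly independent linear forms whose kernels meet `S` in `A`. -/
def IsTangentPoly {k : ℕ} (t : ℕ) (S A : Set (Fin k → F)) (f : (Fin k → F) → F) : Prop :=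
  ∃ α : Fin t → ((Fin k → F) →ₗ[F] F),
    (∀ i j, i ≠ j → LinearIndependent F ![α i, α j]) ∧
    (∀ i, S ∩ {x | α i x = 0} = A) ∧
    ∀ x, f x = ∏ i, α i x

/-- Compatible families `(α_A)` (on `(k-2)`-subsets) and `(α_C)` (on `(k-1)`-subsets)
of nonzero scalars, relative to the tangent polynomials `f`. -/
def CompatibleFamilies {k m : ℕ} (t : ℕ) (g : Fin m → Fin k → F)
    (f : Finset (Fin m) → (Fin k → F) → F) (a c : Finset (Fin m) → F) : Prop :=
  (∀ A : Finset (Fin m), A.card = k - 2 → a A ≠ 0) ∧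
  (∀ C : Finset (Fin m), C.card = k - 1 → c C ≠ 0) ∧
  ∀ A : Finset (Fin m), A.card = k - 2 → ∀ e, e ∉ A →
    c (insert e A) =
      (-1 : F) ^ ((A.filter fun i => e < i).card * (t + 1)) * a A * f A (g e)

/-- The polynomial `φ(Y₁, …, Y_{k-1}) = Σ_C (α_C)^e ∏_{z ∈ E∖C} det(z,Y)/det(z,C)`. -/
noncomputable def phiPoly {k M : ℕ} (e : ℕ) (g : Fin M → Fin k → F)
    (c : Finset (Fin M) → F) (E : Finset (Fin M)) (Y : Fin (k - 1) → Fin k → F) : F :=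
  ∑ C ∈ E.powersetCard (k - 1), (c C) ^ e *
    ∏ z ∈ E \ C, detRows (g z) Y / detWith g (g z) C

/-- `(G, n)` has *Property W*. -/
def PropertyW {k m : ℕ} (g : Fin m → Fin k → F) (n : ℕ) : Prop :=
  ∀ A : Finset (Fin m), A.card = k - 2 →
    ∃ (C : Finset (Fin m)) (Cs : Fin (m - n - k + 1) → Finset (Fin m)),
      C.card = k - 1 ∧ A ⊆ C ∧
      (∀ i, (Cs i).card = k - 1 ∧ A ⊆ Cs i ∧ Cs i ≠ C) ∧
      Function.Injective Cs ∧
      ∀ i, ∃ x, ∀ D : {C : Finset (Fin m) // C.card = k - 1},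
        ((arcMatrix g n).mulVec x) D ≠ 0 ↔ (D.1 = C ∨ D.1 = Cs i)


private lemma arc_inj2 {α : Type*} {x y : α} (hxy : x ≠ y) :
    Function.Injective ![x, y] := by
  intro a b hab
  fin_cases a <;> fin_cases b <;> simp_all

private lemma arc_inj3 {α : Type*} {x y z : α} (hxy : x ≠ y) (hxz : x ≠ z) (hyz : y ≠ z) :
    Function.Injective ![x, y, z] := by
  intro a b hab
  fin_cases a <;> fin_cases b <;> simp_all

private lemma arc_symm_span {V : Type*} [AddCommGroup V] [Module F V] {y z : V}
    (hy : y ≠ 0) (h : y ∈ Submodule.span F {z}) : z ∈ Submodule.span F {y} := by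
  rw [Submodule.mem_span_singleton] at h ⊢
  obtain ⟨c, rfl⟩ := h
  have hc : c ≠ 0 := by rintro rfl; simp at hy
  exact ⟨c⁻¹, by simp [smul_smul, inv_mul_cancel₀ hc]⟩

open scoped Classical in
private lemma arc_card_filter_span {V : Type*} [AddCommGroup V] [Module F V] [Fintype F]
    [Fintype V] [DecidableEq V] {y : V} (hy : y ≠ 0) :
    (Finset.univ.filter (fun v => v ∈ Submodule.span F {y})).card = Fintype.card F := by
  have h : Finset.univ.filter (fun v => v ∈ Submodule.span F {y})
      = Finset.univ.image (fun c : F => c • y) := by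
    ext v
    simp [Submodule.mem_span_singleton, eq_comm]
  rw [h, Finset.card_image_of_injective _ (smul_left_injective F hy), Finset.card_univ]

open scoped Classical in
/-- Counting: pairwise non-proportional nonzero vectors. -/
private lemma arc_counting {V : Type*} [AddCommGroup V] [Module F V] [Fintype F]
    [Fintype V] [DecidableEq V] (T : Finset V) (h0 : ∀ y ∈ T, y ≠ 0)
    (hp : ∀ y ∈ T, ∀ z ∈ T, y ≠ z → y ∉ Submodule.span F {z}) :
    T.card * (Fintype.card F - 1) + 1 ≤ Fintype.card V := by
  set B : Finset V := T.biUnion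
    (fun y => (Finset.univ.filter (fun v => v ∈ Submodule.span F {y})).erase 0) with hB
  have hdisj : ∀ y ∈ T, ∀ z ∈ T, y ≠ z →
      Disjoint ((Finset.univ.filter (fun v => v ∈ Submodule.span F {y})).erase 0)
        ((Finset.univ.filter (fun v => v ∈ Submodule.span F {z})).erase 0) := by
    intro y hy z hz hyz
    rw [Finset.disjoint_left]
    intro v hv1 hv2
    have hv0 : v ≠ 0 := (Finset.mem_erase.mp hv1).1
    have hvy : v ∈ Submodule.span F {y} := by
      simpa using (Finset.mem_erase.mp hv1).2
    have hvz : v ∈ Submodule.span F {z} := by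
      simpa using (Finset.mem_erase.mp hv2).2
    have hyv : y ∈ Submodule.span F {v} := arc_symm_span hv0 hvy
    exact hp y hy z hz hyz (Submodule.span_le.mpr (by simpa using hvz) hyv)
  have hcardB : B.card = T.card * (Fintype.card F - 1) := by
    rw [hB, Finset.card_biUnion hdisj]
    have heq : ∀ y ∈ T,
        ((Finset.univ.filter (fun v => v ∈ Submodule.span F {y})).erase 0).card
          = Fintype.card F - 1 := by
      intro y hy
      rw [Finset.card_erase_of_mem (by simp), arc_card_filter_span (h0 y hy)]
    rw [Finset.sum_congr rfl heq, Finset.sum_const, smul_eq_mul]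
  have hBsub : B ⊆ Finset.univ.erase 0 := by
    intro v hv
    obtain ⟨y, _, hv2⟩ := Finset.mem_biUnion.mp hv
    exact Finset.mem_erase.mpr ⟨(Finset.mem_erase.mp hv2).1, Finset.mem_univ v⟩
  have := Finset.card_le_card hBsub
  rw [Finset.card_erase_of_mem (Finset.mem_univ 0), Finset.card_univ] at this
  have h1 : 1 ≤ Fintype.card V := Fintype.card_pos
  omega

private lemma arc_even_invol {α : Type*} [DecidableEq α] (σ : α → α) (T : Finset α)
    (h : ∀ x ∈ T, σ x ∈ T ∧ σ x ≠ x ∧ σ (σ x) = x) : Even T.card := by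
  classical
  revert h
  induction T using Finset.strongInductionOn with
  | _ T ih =>
    intro h
    rcases T.eq_empty_or_nonempty with rfl | ⟨x, hx⟩
    · simp
    · obtain ⟨hσx, hne, hinv⟩ := h x hx
      set T' := (T.erase x).erase (σ x) with hT'
      have hsubset : T' ⊆ T := fun y hy =>
        Finset.erase_subset _ _ (Finset.erase_subset _ _ hy)
      have hxT' : x ∉ T' := by simp [hT']
      have hssub : T' ⊂ T := Finset.ssubset_iff_of_subset hsubset |>.mpr ⟨x, hx, hxT'⟩
      have hclosed : ∀ y ∈ T', σ y ∈ T' ∧ σ y ≠ y ∧ σ (σ y) = y := by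
        intro y hy
        have hyT : y ∈ T := hsubset hy
        obtain ⟨h1, h2, h3⟩ := h y hyT
        have hyx : y ≠ x := (Finset.mem_erase.mp (Finset.mem_erase.mp hy).2).1
        have hyσx : y ≠ σ x := (Finset.mem_erase.mp hy).1
        refine ⟨?_, h2, h3⟩
        have hσyx : σ y ≠ x := by
          intro hc
          apply hyσx
          rw [← h3, hc]
        have hσyσx : σ y ≠ σ x := by
          intro hc
          apply hyx
          rw [← h3, hc, hinv]
        exact Finset.mem_erase.mpr ⟨hσyσx, Finset.mem_erase.mpr ⟨hσyx, h1⟩⟩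
      have hcard : T.card = T'.card + 2 := by
        have h1 : σ x ∈ T.erase x := Finset.mem_erase.mpr ⟨hne, hσx⟩
        have c1 : (T.erase x).card = T.card - 1 := Finset.card_erase_of_mem hx
        have c2 : T'.card = (T.erase x).card - 1 := Finset.card_erase_of_mem h1
        have hpos : 1 ≤ T.card := Finset.card_pos.mpr ⟨x, hx⟩
        have hpos2 : 1 ≤ (T.erase x).card := Finset.card_pos.mpr ⟨σ x, h1⟩
        omega
      rw [hcard]
      exact (ih T' hssub hclosed).add (by norm_num)

private lemma arc_li_quotient {V : Type*} [AddCommGroup V] [Module F V] {x : V} {n : ℕ}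
    {f : Fin n → V} (h : LinearIndependent F (Fin.cons x f : Fin (n + 1) → V)) :
    LinearIndependent F ((Submodule.span F {x}).mkQ ∘ f) := by
  rw [Fintype.linearIndependent_iff] at h ⊢
  intro g hg
  have hmem : (∑ i, g i • f i) ∈ Submodule.span F {x} := by
    rw [← Submodule.Quotient.mk_eq_zero, ← Submodule.mkQ_apply, map_sum]
    simpa [Function.comp] using hg
  obtain ⟨c, hc⟩ := Submodule.mem_span_singleton.mp hmem
  have key := h (Fin.cons (-c) g) ?_
  · intro i
    simpa using key i.succ
  · rw [Fin.sum_univ_succ]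
    simp only [Fin.cons_succ, Fin.cons_zero]
    rw [← hc]
    simp


open scoped Classical in
private lemma arc_plane {V : Type*} [AddCommGroup V] [Module F V] [Fintype F]
    [FiniteDimensional F V]
    (hq : Odd (Fintype.card F)) (hdim : Module.finrank F V = 3) (S : Finset V)
    (hind : ∀ n : ℕ, n ≤ 3 → ∀ f : Fin n → V, Function.Injective f → (∀ i, f i ∈ S) →
      LinearIndependent F f) :
    S.card ≤ Fintype.card F + 1 := by
  by_contra hcon
  push_neg at hcon
  set q := Fintype.card F with hqdef
  have hq2 : 2 ≤ q := Fintype.one_lt_card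
  have hq3 : 3 ≤ q := by obtain ⟨m, hm⟩ := hq; omega
  obtain ⟨S₀, hS₀S, hS₀card⟩ := Finset.exists_subset_card_eq
    (show q + 2 ≤ S.card by omega)
  have hind₀ : ∀ n : ℕ, n ≤ 3 → ∀ f : Fin n → V, Function.Injective f → (∀ i, f i ∈ S₀) →
      LinearIndependent F f := fun n hn f hf hfs => hind n hn f hf (fun i => hS₀S (hfs i))
  have hne0 : ∀ x ∈ S₀, x ≠ 0 := by
    intro x hx
    have h := hind₀ 1 (by norm_num) ![x] (fun a b _ => Subsingleton.elim a b) (by simp [hx])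
    simpa using h.ne_zero 0
  have hpair : ∀ x ∈ S₀, ∀ y ∈ S₀, x ≠ y → x ∉ Submodule.span F {y} := by
    intro x hx y hy hxy hmem
    obtain ⟨a, ha⟩ := Submodule.mem_span_singleton.mp hmem
    have hli := hind₀ 2 (by norm_num) ![x, y] (arc_inj2 hxy)
      (by intro i; fin_cases i <;> simp [hx, hy])
    exact (linearIndependent_fin2.mp hli).2 a (by simpa using ha)
  have htrip : ∀ x ∈ S₀, ∀ y ∈ S₀, ∀ z ∈ S₀, x ≠ y → x ≠ z → y ≠ z →
      z ∉ Submodule.span F ({x, y} : Set V) := by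
    intro x hx y hy z hz hxy hxz hyz hmem
    obtain ⟨a, b, hab⟩ := Submodule.mem_span_pair.mp hmem
    have hli := hind₀ 3 le_rfl ![x, y, z] (arc_inj3 hxy hxz hyz)
      (by intro i; fin_cases i <;> simp [hx, hy, hz])
    have hco := Fintype.linearIndependent_iff.mp hli ![a, b, -1] ?_ 2
    · simp at hco
    · rw [Fin.sum_univ_three]
      simp only [Matrix.cons_val_zero, Matrix.cons_val_one, Matrix.head_cons,
        Matrix.cons_val_two, Matrix.tail_cons, neg_smul, one_smul]
      rw [hab]
      abel
  have hfinV : Finite V := Module.finite_of_finite F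
  have hftV : Fintype V := Fintype.ofFinite V
  have cardV : Fintype.card V = q ^ 3 := by
    rw [Module.card_eq_pow_finrank (K := F) (V := V), hdim]
  -- find an external point P
  set A : Finset V := S₀.biUnion
    (fun y => Finset.univ.filter (fun v => v ∈ Submodule.span F {y})) with hA
  have hAcard : A.card ≤ (q + 2) * q := by
    refine le_trans Finset.card_biUnion_le ?_
    have h1 : ∀ y ∈ S₀,
        (Finset.univ.filter (fun v => v ∈ Submodule.span F {y})).card = q :=
      fun y hy => arc_card_filter_span (hne0 y hy)
    rw [Finset.sum_congr rfl h1, Finset.sum_const, smul_eq_mul, hS₀card]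
  have hex : ∃ P : V, P ∉ A := by
    by_contra hno
    push_neg at hno
    have hle : Finset.univ.card ≤ A.card := Finset.card_le_card (fun v _ => hno v)
    rw [Finset.card_univ, cardV] at hle
    nlinarith [hAcard, hq3, hle]
  obtain ⟨P, hPA⟩ := hex
  have hP : ∀ y ∈ S₀, P ∉ Submodule.span F {y} := by
    intro y hy hmem
    exact hPA (Finset.mem_biUnion.mpr ⟨y, hy, by simp [hmem]⟩)
  have hP0 : P ≠ 0 := by
    obtain ⟨y, hy⟩ := Finset.card_pos.mp (show 0 < S₀.card by omega)
    intro h; exact hP y hy (h ▸ Submodule.zero_mem _)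
  -- every "line" through P and a point of S₀ meets S₀ again
  have hsec : ∀ x ∈ S₀, ∃ y, y ∈ S₀ ∧ y ≠ x ∧ y ∈ Submodule.span F ({P, x} : Set V) := by
    intro x hx
    by_contra hno
    push_neg at hno
    have hx0 := hne0 x hx
    set p : Submodule F V := Submodule.span F {x} with hp
    have hfinQ : Finite (V ⧸ p) := Finite.of_surjective _ (Submodule.mkQ_surjective p)
    have hftQ : Fintype (V ⧸ p) := Fintype.ofFinite _
    have hcardQ : Fintype.card (V ⧸ p) = q ^ 2 := by
      rw [Module.card_eq_pow_finrank (K := F) (V := V ⧸ p)]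
      congr 1
      have h1 := Submodule.finrank_quotient_add_finrank p
      have h2 : Module.finrank F p = 1 := finrank_span_singleton hx0
      rw [hdim, h2] at h1
      omega
    set π := p.mkQ with hπ
    have hπ0 : ∀ y ∈ S₀, y ≠ x → π y ≠ 0 := by
      intro y hy hyx h0
      rw [hπ, Submodule.mkQ_apply, Submodule.Quotient.mk_eq_zero] at h0
      exact hpair y hy x hx hyx h0
    have hπP : π P ≠ 0 := by
      intro h0
      rw [hπ, Submodule.mkQ_apply, Submodule.Quotient.mk_eq_zero] at h0
      exact hP x hx h0
    have hπinj : ∀ y ∈ S₀.erase x, ∀ y' ∈ S₀.erase x, π y = π y' → y = y' := by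
      intro y hy y' hy' heq
      by_contra hne
      obtain ⟨hyx, hyS⟩ := Finset.mem_erase.mp hy
      obtain ⟨hy'x, hy'S⟩ := Finset.mem_erase.mp hy'
      rw [hπ, Submodule.mkQ_apply, Submodule.mkQ_apply, Submodule.Quotient.eq] at heq
      obtain ⟨c, hc⟩ := Submodule.mem_span_singleton.mp heq
      refine htrip x hx y' hy'S y hyS (Ne.symm hy'x) (Ne.symm hyx) (Ne.symm hne) ?_
      refine Submodule.mem_span_pair.mpr ⟨c, 1, ?_⟩
      rw [one_smul, hc]
      abel
    set T : Finset (V ⧸ p) := insert (π P) ((S₀.erase x).image π) with hT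
    have hPnotim : π P ∉ (S₀.erase x).image π := by
      intro hmem
      obtain ⟨y, hy, hyeq⟩ := Finset.mem_image.mp hmem
      obtain ⟨hyx, hyS⟩ := Finset.mem_erase.mp hy
      rw [hπ, Submodule.mkQ_apply, Submodule.mkQ_apply, Submodule.Quotient.eq] at hyeq
      obtain ⟨c, hc⟩ := Submodule.mem_span_singleton.mp hyeq
      refine hno y hyS hyx (Submodule.mem_span_pair.mpr ⟨1, c, ?_⟩)
      rw [one_smul, hc]
      abel
    have hTcard : T.card = q + 2 := by
      rw [hT, Finset.card_insert_of_notMem hPnotim,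
        Finset.card_image_of_injOn (fun a ha b hb => hπinj a ha b hb),
        Finset.card_erase_of_mem hx, hS₀card]
      omega
    have hT0 : ∀ v ∈ T, v ≠ 0 := by
      intro v hv
      rcases Finset.mem_insert.mp hv with rfl | hv
      · exact hπP
      · obtain ⟨y, hy, rfl⟩ := Finset.mem_image.mp hv
        obtain ⟨hyx, hyS⟩ := Finset.mem_erase.mp hy
        exact hπ0 y hyS hyx
    -- π P is not proportional to any π y
    have hPy : ∀ y ∈ S₀.erase x, π P ∉ Submodule.span F {π y} := by
      intro y hy hmem
      obtain ⟨hyx, hyS⟩ := Finset.mem_erase.mp hy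
      obtain ⟨c, hc⟩ := Submodule.mem_span_singleton.mp hmem
      -- hc : c • π y = π P, i.e. π (c • y) = π P
      have hc' : π (c • y) = π P := by rw [map_smul]; exact hc
      rw [hπ, Submodule.mkQ_apply, Submodule.mkQ_apply, Submodule.Quotient.eq] at hc'
      obtain ⟨d, hd⟩ := Submodule.mem_span_singleton.mp hc'
      -- hd : d • x = c • y - P
      have hcne : c ≠ 0 := by
        rintro rfl
        apply hP x hx
        rw [Submodule.mem_span_singleton]
        refine ⟨-d, ?_⟩
        rw [neg_smul, hd, zero_smul]
        abel
      refine hno y hyS hyx (Submodule.mem_span_pair.mpr ⟨c⁻¹, c⁻¹ * d, ?_⟩)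
      have hy' : c • y = P + d • x := by rw [hd]; abel
      calc c⁻¹ • P + (c⁻¹ * d) • x = c⁻¹ • (P + d • x) := by rw [smul_add, smul_smul]
        _ = c⁻¹ • (c • y) := by rw [hy']
        _ = y := by rw [smul_smul, inv_mul_cancel₀ hcne, one_smul]
    -- distinct images are non-proportional
    have him : ∀ y ∈ S₀.erase x, ∀ y' ∈ S₀.erase x, π y ≠ π y' →
        π y ∉ Submodule.span F {π y'} := by
      intro y hy y' hy' hne hmem
      obtain ⟨hyx, hyS⟩ := Finset.mem_erase.mp hy
      obtain ⟨hy'x, hy'S⟩ := Finset.mem_erase.mp hy'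
      have hyy' : y ≠ y' := by rintro rfl; exact hne rfl
      obtain ⟨c, hc⟩ := Submodule.mem_span_singleton.mp hmem
      have hc' : π (c • y') = π y := by rw [map_smul]; exact hc
      rw [hπ, Submodule.mkQ_apply, Submodule.mkQ_apply, Submodule.Quotient.eq] at hc'
      obtain ⟨d, hd⟩ := Submodule.mem_span_singleton.mp hc'
      -- hd : d • x = c • y' - y, so y = -(d) • x + c • y' ∈ span {x, y'}
      refine htrip x hx y' hy'S y hyS (Ne.symm hy'x) (Ne.symm hyx) (Ne.symm hyy') ?_
      refine Submodule.mem_span_pair.mpr ⟨-d, c, ?_⟩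
      rw [neg_smul, hd]
      abel
    have hTp : ∀ v ∈ T, ∀ w ∈ T, v ≠ w → v ∉ Submodule.span F {w} := by
      intro v hv w hw hvw
      rcases Finset.mem_insert.mp hv with rfl | hv'
      · rcases Finset.mem_insert.mp hw with rfl | hw'
        · exact absurd rfl hvw
        · obtain ⟨y, hy, rfl⟩ := Finset.mem_image.mp hw'
          exact hPy y hy
      · obtain ⟨y, hy, rfl⟩ := Finset.mem_image.mp hv'
        rcases Finset.mem_insert.mp hw with rfl | hw'
        · intro hmem
          have hy0 : π y ≠ 0 := hT0 _ hv
          exact hPy y hy (arc_symm_span hy0 hmem)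
        · obtain ⟨y', hy', rfl⟩ := Finset.mem_image.mp hw'
          exact him y hy y' hy' hvw
    have hcount := arc_counting T hT0 hTp
    rw [hTcard, hcardQ] at hcount
    obtain ⟨r, hr⟩ : ∃ r, q = r + 3 := ⟨q - 3, by omega⟩
    have h2 : q - 1 = r + 2 := by omega
    rw [hr, h2] at hcount
    nlinarith [hcount]
  -- uniqueness of the second point on a line through P
  have huniq : ∀ x ∈ S₀, ∀ y ∈ S₀, ∀ y' ∈ S₀, y ≠ x → y' ≠ x →
      y ∈ Submodule.span F ({P, x} : Set V) → y' ∈ Submodule.span F ({P, x} : Set V) →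
      y = y' := by
    intro x hx y hy y' hy' hyx hy'x hmy hmy'
    by_contra hne
    have hli := hind₀ 3 le_rfl ![x, y, y'] (arc_inj3 (Ne.symm hyx) (Ne.symm hy'x) hne)
      (by intro i; fin_cases i <;> simp [hx, hy, hy'])
    have h3 : Module.finrank F (Submodule.span F (Set.range ![x, y, y'])) = 3 := by
      rw [finrank_span_eq_card hli]
      simp
    have hle : Submodule.span F (Set.range ![x, y, y']) ≤
        Submodule.span F ({P, x} : Set V) := by
      rw [Submodule.span_le]
      rintro v ⟨i, rfl⟩
      fin_cases i
      · simpa using Submodule.subset_span (show x ∈ ({P, x} : Set V) by simp)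
      · simpa using hmy
      · simpa using hmy'
    have h2 : Module.finrank F (Submodule.span F ({P, x} : Set V)) ≤ 2 := by
      refine le_trans (finrank_span_le_card _) ?_
      rw [Set.toFinset_insert, Set.toFinset_singleton]
      exact le_trans (Finset.card_insert_le _ _) (by simp)
    have hmono := Submodule.finrank_mono hle
    omega
  -- the involution
  set σ : V → V := fun v => if hv : v ∈ S₀ then (hsec v hv).choose else v with hσ
  have hσspec : ∀ x ∈ S₀, σ x ∈ S₀ ∧ σ x ≠ x ∧ σ x ∈ Submodule.span F ({P, x} : Set V) := by
    intro x hx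
    rw [hσ]
    simp only [dif_pos hx]
    exact (hsec x hx).choose_spec
  have hinvol : ∀ x ∈ S₀, σ x ∈ S₀ ∧ σ x ≠ x ∧ σ (σ x) = x := by
    intro x hx
    obtain ⟨h1, h2, h3⟩ := hσspec x hx
    refine ⟨h1, h2, ?_⟩
    obtain ⟨g1, g2, g3⟩ := hσspec (σ x) h1
    obtain ⟨a, b, hab⟩ := Submodule.mem_span_pair.mp h3
    have hb : b ≠ 0 := by
      rintro rfl
      rw [zero_smul, add_zero] at hab
      have ha : a ≠ 0 := by
        rintro rfl
        rw [zero_smul] at hab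
        exact hne0 (σ x) h1 hab.symm
      apply hP (σ x) h1
      rw [Submodule.mem_span_singleton]
      exact ⟨a⁻¹, by rw [← hab, smul_smul, inv_mul_cancel₀ ha, one_smul]⟩
    have hxmem : x ∈ Submodule.span F ({P, σ x} : Set V) := by
      refine Submodule.mem_span_pair.mpr ⟨-(b⁻¹ * a), b⁻¹, ?_⟩
      rw [← hab, smul_add, smul_smul, smul_smul, inv_mul_cancel₀ hb, one_smul, neg_smul]
      exact neg_add_cancel_left _ _
    exact huniq (σ x) h1 (σ (σ x)) g1 x hx g2 (Ne.symm h2) g3 hxmem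
  have heven := arc_even_invol σ S₀ hinvol
  rw [hS₀card] at heven
  obtain ⟨m, hm⟩ := hq
  obtain ⟨t, ht⟩ := heven
  omega

universe u_arc

private theorem arc_key [Fintype F] (hq : Odd (Fintype.card F)) :
    ∀ k : ℕ, 3 ≤ k → ∀ (V : Type u_arc) [AddCommGroup V] [Module F V] [FiniteDimensional F V],
      Module.finrank F V = k → ∀ S : Finset V,
      (∀ n : ℕ, n ≤ k → ∀ f : Fin n → V, Function.Injective f → (∀ i, f i ∈ S) →
        LinearIndependent F f) →
      S.card ≤ Fintype.card F + k - 2 := by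
  intro k hk
  induction k, hk using Nat.le_induction with
  | base =>
    intro V _ _ _ hdim S hind
    have h := arc_plane hq hdim S hind
    omega
  | succ k hk ih =>
    intro V _ _ _ hdim S hind
    classical
    by_cases hcard : S.card ≤ k
    · have hq1 : 1 ≤ Fintype.card F := Fintype.card_pos
      omega
    push_neg at hcard
    obtain ⟨x, hx⟩ := Finset.card_pos.mp (show 0 < S.card by omega)
    have hx0 : x ≠ 0 := by
      have h := hind 1 (by omega) ![x] (fun a b _ => Subsingleton.elim a b) (by simp [hx])
      simpa using h.ne_zero 0
    set p : Submodule F V := Submodule.span F {x} with hp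
    have hdimQ : Module.finrank F (V ⧸ p) = k := by
      have h1 := Submodule.finrank_quotient_add_finrank p
      have h2 : Module.finrank F p = 1 := finrank_span_singleton hx0
      rw [hdim, h2] at h1
      omega
    set π := p.mkQ with hπ
    have hπinj : ∀ y ∈ S.erase x, ∀ y' ∈ S.erase x, π y = π y' → y = y' := by
      intro y hy y' hy' heq
      by_contra hne
      obtain ⟨hyx, hyS⟩ := Finset.mem_erase.mp hy
      obtain ⟨hy'x, hy'S⟩ := Finset.mem_erase.mp hy'
      rw [hπ, Submodule.mkQ_apply, Submodule.mkQ_apply, Submodule.Quotient.eq] at heq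
      obtain ⟨c, hc⟩ := Submodule.mem_span_singleton.mp heq
      have hli := hind 3 (by omega) ![x, y, y'] (arc_inj3 (Ne.symm hyx) (Ne.symm hy'x) hne)
        (by intro i; fin_cases i <;> simp [hx, hyS, hy'S])
      have hco := Fintype.linearIndependent_iff.mp hli ![-c, 1, -1] ?_ 1
      · simp at hco
      · rw [Fin.sum_univ_three]
        simp only [Matrix.cons_val_zero, Matrix.cons_val_one, Matrix.head_cons,
          Matrix.cons_val_two, Matrix.tail_cons, neg_smul, one_smul]
        rw [hc]
        abel
    set S' : Finset (V ⧸ p) := (S.erase x).image π with hS'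
    have hcard' : S'.card = S.card - 1 := by
      rw [hS', Finset.card_image_of_injOn (fun a ha b hb => hπinj a ha b hb),
        Finset.card_erase_of_mem hx]
    have hind' : ∀ n : ℕ, n ≤ k → ∀ f' : Fin n → V ⧸ p, Function.Injective f' →
        (∀ i, f' i ∈ S') → LinearIndependent F f' := by
      intro n hn f' hf' hvals
      have hex : ∀ i, ∃ y, y ∈ S.erase x ∧ π y = f' i := by
        intro i
        obtain ⟨y, hy, hyeq⟩ := Finset.mem_image.mp (hvals i)
        exact ⟨y, hy, hyeq⟩
      choose g hg1 hg2 using hex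
      have hginj : Function.Injective g := by
        intro i j hij
        apply hf'
        rw [← hg2 i, ← hg2 j, hij]
      have hxnr : x ∉ Set.range g := by
        rintro ⟨i, rfl⟩
        exact (Finset.mem_erase.mp (hg1 i)).1 rfl
      have hli := hind (n + 1) (by omega) (Fin.cons x g)
        (Fin.cons_injective_iff.mpr ⟨hxnr, hginj⟩)
        (by
          intro i
          refine Fin.cases ?_ ?_ i
          · simpa using hx
          · intro j
            simpa using Finset.mem_of_mem_erase (hg1 j))
      have hliq := arc_li_quotient (F := F) hli
      have heq : π ∘ g = f' := funext hg2
      rw [← heq]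
      exact hliq
    have hfin := ih (V ⧸ p) hdimQ S' hind'
    rw [hcard'] at hfin
    have hq1 : 1 ≤ Fintype.card F := Fintype.card_pos
    omega

theorem stmt19 [Fintype F] {k : ℕ} (hk : 3 ≤ k)
    (hq : Odd (Fintype.card F))
    (S : Finset (Fin k → F)) (hS : IsArc (↑S : Set (Fin k → F))) :
    S.card ≤ Fintype.card F + k - 2 := by
  classical
  by_cases hcard : S.card < k
  · have hq2 : 2 ≤ Fintype.card F := Fintype.one_lt_card
    omega
  push_neg at hcard
  have hgood : ∀ n : ℕ, n ≤ k → ∀ f : Fin n → (Fin k → F), Function.Injective f →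
      (∀ i, f i ∈ S) → LinearIndependent F f := by
    intro n hn f hf hfs
    have himsub : (Finset.univ.image f) ⊆ S := by
      intro v hv
      obtain ⟨i, _, rfl⟩ := Finset.mem_image.mp hv
      exact hfs i
    have himcard : (Finset.univ.image f).card ≤ k :=
      le_trans (le_trans Finset.card_image_le (by simp)) hn
    obtain ⟨T, hT1, hT2, hT3⟩ := Finset.exists_subsuperset_card_eq himsub himcard hcard
    have hli := hS T (by exact_mod_cast hT2) hT3
    have hmem : ∀ i, f i ∈ T := fun i => hT1 (Finset.mem_image.mpr ⟨i, Finset.mem_univ i, rfl⟩)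
    have hginj : Function.Injective (fun i => (⟨f i, hmem i⟩ : {v // v ∈ T})) := by
      intro i j hij
      apply hf
      simpa using congrArg Subtype.val hij
    exact hli.comp _ hginj
  exact arc_key (F := F) hq k hk (Fin k → F) (Module.finrank_fin_fun F) S hgood
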